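/- For all κ > 0 and Δt > 0, the covariance matrix ((σ_R², σ_{R,I}), (σ_{R,I}, σ_I²)) with σ_R² = (1-e^{-2κΔt})/(2κ), σ_I² = (2κΔt + 4e^{-κΔt} - e^{-2κΔt} - 3)/(2κ³), and σ_{R,I} = (1-e^{-κΔt})²/(2κ²) is positive semidefinite, i.e., σ_{R,I}² ≤ σ_R² σ_I². -/

import Mathlib

/-!
Put `x = κΔt` and `u = e^{-x}`. After clearing the common factor `4κ⁴`, the difference of the two
sides is `2 (1 - u) (x (1 + u) - 2 (1 - u))`. The second factor (whose nonnegativity for `x ≥ 0`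
is `tanh (x / 2) ≤ x / 2`) vanishes at `x = 0` and has
derivative `1 - (1 + x) e^{-x} ≥ 0`, so it has the sign of `x`, which is also the sign of `1 - u`.
-/

open Real

theorem monotone_mul_one_add_exp_neg_sub :
    Monotone fun x : ℝ => x * (1 + exp (-x)) - 2 * (1 - exp (-x)) := by
  refine monotone_of_hasDerivAt_nonneg (f' := fun x => 1 - (1 + x) * exp (-x))
    (fun x => ?_) (fun x => ?_)
  · have hexp := (hasDerivAt_neg x).exp
    exact (((hasDerivAt_id' x).mul (hexp.const_add 1)).sub
      ((hexp.const_sub 1).const_mul 2)).congr_deriv (by ring)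
  · have h := mul_le_mul_of_nonneg_right (add_one_le_exp x) (exp_pos (-x)).le
    rw [← exp_add, add_neg_cancel, exp_zero, add_comm] at h
    exact sub_nonneg.2 h

theorem one_sub_exp_neg_mul_mul_one_add_exp_neg_sub_nonneg (x : ℝ) :
    0 ≤ (1 - exp (-x)) * (x * (1 + exp (-x)) - 2 * (1 - exp (-x))) := by
  rcases le_total 0 x with hx | hx
  · have hg := monotone_mul_one_add_exp_neg_sub hx
    simp only [neg_zero, exp_zero] at hg
    exact mul_nonneg (sub_nonneg.2 (exp_le_one_iff.2 (neg_nonpos.2 hx))) (by linarith)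
  · have hg := monotone_mul_one_add_exp_neg_sub hx
    simp only [neg_zero, exp_zero] at hg
    exact mul_nonneg_of_nonpos_of_nonpos (sub_nonpos.2 (one_le_exp_iff.2 (neg_nonneg.2 hx)))
      (by linarith)

theorem one_sub_exp_neg_pow_four_le (x : ℝ) :
    (1 - exp (-x)) ^ 4 ≤ (1 - exp (-(2 * x))) * (2 * x + 4 * exp (-x) - exp (-(2 * x)) - 3) := by
  have hsq : exp (-(2 * x)) = exp (-x) ^ 2 := by rw [← exp_nat_mul]; ring_nf
  rw [hsq]
  linear_combination 2 * one_sub_exp_neg_mul_mul_one_add_exp_neg_sub_nonneg x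

theorem covariance_matrix_psd_general (κ Δt : ℝ) :
    ((1 - Real.exp (-κ * Δt)) ^ 2 / (2 * κ ^ 2)) ^ 2
      ≤ ((1 - Real.exp (-2 * κ * Δt)) / (2 * κ)) *
        ((2 * κ * Δt + 4 * Real.exp (-κ * Δt) - Real.exp (-2 * κ * Δt) - 3) / (2 * κ ^ 3)) := by
  have h1 : -κ * Δt = -(κ * Δt) := by ring
  have h2 : -2 * κ * Δt = -(2 * (κ * Δt)) := by ring
  rw [h1, h2, mul_assoc 2 κ Δt]
  calc ((1 - exp (-(κ * Δt))) ^ 2 / (2 * κ ^ 2)) ^ 2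
      = (1 - exp (-(κ * Δt))) ^ 4 / (4 * κ ^ 4) := by ring
    _ ≤ (1 - exp (-(2 * (κ * Δt)))) *
          (2 * (κ * Δt) + 4 * exp (-(κ * Δt)) - exp (-(2 * (κ * Δt))) - 3) / (4 * κ ^ 4) := by
        gcongr
        exact one_sub_exp_neg_pow_four_le _
    _ = _ := by rw [div_mul_div_comm]; ring

/-- For all `κ > 0` and `Δt > 0`, the covariance matrix of
`(R_{t+Δt} - R_t, I_{t+Δt} - I_t)` given `R_t` is positive semidefinite, i.e.
`σ_{R,I}² ≤ σ_R² σ_I²` for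
`σ_R² = (1-e^{-2κΔt})/(2κ)`, `σ_I² = (2κΔt + 4e^{-κΔt} - e^{-2κΔt} - 3)/(2κ³)` and
`σ_{R,I} = (1-e^{-κΔt})²/(2κ²)`. -/
theorem covariance_matrix_psd (κ Δt : ℝ) (hκ : 0 < κ) (hΔt : 0 < Δt) :
    ((1 - Real.exp (-κ * Δt)) ^ 2 / (2 * κ ^ 2)) ^ 2
      ≤ ((1 - Real.exp (-2 * κ * Δt)) / (2 * κ)) *
        ((2 * κ * Δt + 4 * Real.exp (-κ * Δt) - Real.exp (-2 * κ * Δt) - 3) / (2 * κ ^ 3)) :=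
  covariance_matrix_psd_general κ Δt
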